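/- arXiv:1103.3672 — 4 statements merged into one kernel-verified Lean document; each statement's English description precedes it below -/
import Mathlib

section
/- Let r₀ > 0 and let φ : [r₀, ∞) → ℝ be continuously differentiable with r^{3/2} φ(r) → 0 as r → ∞, and suppose ∫_{r₀}^∞ (r³ - r₀³)² r^{-2} φ'(r)² dr < ∞. Then ∫_{r₀}^∞ r² φ(r)² dr ≤ (4/9) ∫_{r₀}^∞ (r³ - r₀³)² r^{-2} φ'(r)² dr. -/
/-! With `w r = (r³ - r₀³) / 3`, the antiderivative of `r²` vanishing at `r₀`, integrating
`(w φ²)' = r² φ² + 2 w φ φ'` over `[r₀, R]` and bounding the cross term by AM-GM,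
`|2 w φ φ'| ≤ r² φ² / 2 + 2 w² φ'² / r²`, lets the left side absorb half of itself:
`∫_{r₀}^R r² φ² ≤ 2 w(R) φ(R)² + (4/9) ∫_{r₀}^R (r³ - r₀³)² r⁻² φ'²`.
The decay of `r^{3/2} φ` kills the boundary term as `R → ∞`. -/

open Set Filter MeasureTheory Topology

theorem hardy_intervalIntegral_le
    {a b : ℝ} {w v φ φ' : ℝ → ℝ} (hab : a ≤ b)
    (hw : ∀ x ∈ Icc a b, HasDerivAt w (v x) x) (hφ : ∀ x ∈ Icc a b, HasDerivAt φ (φ' x) x)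
    (hv : ContinuousOn v (Icc a b)) (hφ' : ContinuousOn φ' (Icc a b))
    (hv_pos : ∀ x ∈ Icc a b, 0 < v x) (hwa : w a = 0) :
    ∫ x in a..b, v x * φ x ^ 2
      ≤ 2 * (w b * φ b ^ 2) + 4 * ∫ x in a..b, w x ^ 2 / v x * φ' x ^ 2 := by
  rw [← uIcc_of_le hab] at hw hφ hv hφ' hv_pos
  have hwc : ContinuousOn w (uIcc a b) := fun x hx => (hw x hx).continuousAt.continuousWithinAt
  have hφc : ContinuousOn φ (uIcc a b) := fun x hx => (hφ x hx).continuousAt.continuousWithinAt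
  have hf : IntervalIntegrable (fun x => v x * φ x ^ 2) volume a b :=
    (hv.mul (hφc.pow 2)).intervalIntegrable
  have hg : IntervalIntegrable (fun x => w x ^ 2 / v x * φ' x ^ 2) volume a b :=
    (((hwc.pow 2).div hv fun x hx => (hv_pos x hx).ne').mul (hφ'.pow 2)).intervalIntegrable
  have hcross : IntervalIntegrable (fun x => 2 * w x * φ x * φ' x) volume a b :=
    (((continuousOn_const.mul hwc).mul hφc).mul hφ').intervalIntegrable
  have hftc : ∫ x in a..b, (v x * φ x ^ 2 + 2 * w x * φ x * φ' x) = w b * φ b ^ 2 := by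
    rw [intervalIntegral.integral_eq_sub_of_hasDerivAt (f := fun x => w x * φ x ^ 2)
      (fun x hx => ((hw x hx).mul ((hφ x hx).fun_pow 2)).congr_deriv (by ring)) (hf.add hcross)]
    simp [hwa]
  have hamgm : ∫ x in a..b, -(2 * w x * φ x * φ' x)
      ≤ ∫ x in a..b, (v x * φ x ^ 2 / 2 + 2 * (w x ^ 2 / v x * φ' x ^ 2)) := by
    refine intervalIntegral.integral_mono_on hab hcross.neg ((hf.div_const 2).add
      (hg.const_mul 2)) fun x hx => ?_
    have hvx := hv_pos x (uIcc_of_le hab ▸ hx)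
    have hgap : v x * φ x ^ 2 / 2 + 2 * (w x ^ 2 / v x * φ' x ^ 2) + 2 * w x * φ x * φ' x
        = (v x * φ x + 2 * w x * φ' x) ^ 2 / (2 * v x) := by
      field_simp; ring
    have : 0 ≤ (v x * φ x + 2 * w x * φ' x) ^ 2 / (2 * v x) := by positivity
    linarith
  rw [intervalIntegral.integral_add hf hcross] at hftc
  rw [intervalIntegral.integral_neg, intervalIntegral.integral_add (hf.div_const 2)
    (hg.const_mul 2), intervalIntegral.integral_div, intervalIntegral.integral_const_mul] at hamgm
  linarith

theorem setIntegral_Ioi_le_of_intervalIntegral_le {a C : ℝ} {f G : ℝ → ℝ}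
    (hf : ∀ x ∈ Ioi a, 0 ≤ f x) (hfi : ∀ R, IntegrableOn f (Ioc a R))
    (hG : Tendsto G atTop (𝓝 0)) (hle : ∀ᶠ R in atTop, ∫ x in a..R, f x ≤ G R + C) :
    ∫ x in Ioi a, f x ≤ C := by
  have hnorm : ∀ R, a ≤ R → ∫ x in a..R, ‖f x‖ = ∫ x in a..R, f x := fun R hR =>
    intervalIntegral.integral_congr_ae (.of_forall fun x hx =>
      Real.norm_of_nonneg (hf x (uIoc_of_le hR ▸ hx).1))
  have hint : IntegrableOn f (Ioi a) := by
    refine integrableOn_Ioi_of_intervalIntegral_norm_bounded (C + 1) a hfi tendsto_id ?_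
    filter_upwards [hle, hG.eventually (eventually_le_nhds one_pos), eventually_ge_atTop a]
      with R hR hGR haR
    rw [hnorm R haR]
    linarith
  exact le_of_tendsto_of_tendsto (intervalIntegral_tendsto_integral_Ioi a hint tendsto_id)
    (by simpa using hG.add_const C) hle

theorem tendsto_cube_sub_mul_sq_atTop {φ : ℝ → ℝ} (c : ℝ)
    (hdecay : Tendsto (fun r : ℝ => r ^ ((3:ℝ)/2) * φ r) atTop (𝓝 0)) :
    Tendsto (fun r => (r ^ 3 - c) * φ r ^ 2) atTop (𝓝 0) := by
  have hcube : Tendsto (fun r => r ^ 3 * φ r ^ 2) atTop (𝓝 0) := by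
    refine (by simpa using hdecay.pow 2 : Tendsto (fun r : ℝ => (r ^ ((3:ℝ)/2) * φ r) ^ 2) atTop
      (𝓝 0)).congr' ?_
    filter_upwards [eventually_ge_atTop 0] with r hr
    rw [mul_pow, ← Real.rpow_natCast, ← Real.rpow_mul hr]
    norm_num
  have hsq : Tendsto (fun r => φ r ^ 2) atTop (𝓝 0) := by
    refine (hcube.div_atTop (tendsto_pow_atTop three_ne_zero)).congr' ?_
    filter_upwards [eventually_gt_atTop 0] with r hr
    field_simp
  simpa [sub_mul] using hcube.sub (hsq.const_mul c)

theorem hardy_cubic_intervalIntegral_le {r₀ R : ℝ} {φ φ' : ℝ → ℝ} (hr₀ : 0 < r₀) (hR : r₀ ≤ R)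
    (hderiv : ∀ r ∈ Ici r₀, HasDerivAt φ (φ' r) r) (hcont : ContinuousOn φ' (Ici r₀)) :
    ∫ r in r₀..R, r ^ 2 * φ r ^ 2
      ≤ 2 * ((R ^ 3 - r₀ ^ 3) / 3 * φ R ^ 2)
        + 4 / 9 * ∫ r in r₀..R, (r ^ 3 - r₀ ^ 3) ^ 2 / r ^ 2 * φ' r ^ 2 := by
  have hweight : ∀ r, ((r ^ 3 - r₀ ^ 3) / 3) ^ 2 / r ^ 2 * φ' r ^ 2
      = (r ^ 3 - r₀ ^ 3) ^ 2 / r ^ 2 * φ' r ^ 2 / 9 := fun r => by ring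
  have := hardy_intervalIntegral_le (w := fun r => (r ^ 3 - r₀ ^ 3) / 3)
    (v := fun r => r ^ 2) hR
    (fun r _ => (((hasDerivAt_pow 3 r).sub_const _).div_const 3).congr_deriv (by ring))
    (fun r hr => hderiv r hr.1) (continuous_pow 2).continuousOn (hcont.mono Icc_subset_Ici_self)
    (fun r hr => by have := hr₀.trans_le hr.1; positivity) (by ring)
  simp only [hweight, intervalIntegral.integral_div] at this
  linarith

theorem hardy_inequality_weighted
    (r₀ : ℝ) (hr₀ : 0 < r₀) (φ φ' : ℝ → ℝ)
    (hderiv : ∀ r ∈ Set.Ici r₀, HasDerivAt φ (φ' r) r)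
    (hcont : ContinuousOn φ' (Set.Ici r₀))
    (hdecay : Tendsto (fun r : ℝ => r ^ ((3:ℝ)/2) * φ r) atTop (nhds 0))
    (hint : IntegrableOn
      (fun r : ℝ => (r ^ 3 - r₀ ^ 3) ^ 2 / r ^ 2 * (φ' r) ^ 2) (Set.Ici r₀)) :
    ∫ r in Set.Ici r₀, r ^ 2 * (φ r) ^ 2
      ≤ (4 / 9) * ∫ r in Set.Ici r₀, (r ^ 3 - r₀ ^ 3) ^ 2 / r ^ 2 * (φ' r) ^ 2 := by
  have hφ : ContinuousOn φ (Ici r₀) := fun r hr => (hderiv r hr).continuousAt.continuousWithinAt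
  have hf : ContinuousOn (fun r => r ^ 2 * φ r ^ 2) (Ici r₀) := by fun_prop
  have htail : ∀ R, r₀ ≤ R → ∫ r in r₀..R, (r ^ 3 - r₀ ^ 3) ^ 2 / r ^ 2 * φ' r ^ 2
      ≤ ∫ r in Ici r₀, (r ^ 3 - r₀ ^ 3) ^ 2 / r ^ 2 * φ' r ^ 2 := fun R hR => by
    rw [intervalIntegral.integral_of_le hR]
    exact setIntegral_mono_set hint (.of_forall fun r => by positivity)
      (Ioc_subset_Ioi_self.trans Ioi_subset_Ici_self).eventuallyLE
  rw [integral_Ici_eq_integral_Ioi]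
  refine setIntegral_Ioi_le_of_intervalIntegral_le (fun r _ => by positivity)
    (fun R => ((hf.mono Icc_subset_Ici_self).integrableOn_Icc).mono_set Ioc_subset_Icc_self)
    (by simpa using ((tendsto_cube_sub_mul_sq_atTop (r₀ ^ 3) hdecay).div_const 3).const_mul 2)
    ?_
  filter_upwards [eventually_ge_atTop r₀] with R hR
  linarith [hardy_cubic_intervalIntegral_le hr₀ hR hderiv hcont, htail R hR]
end

section
/- Let v₀ ∈ ℝ, b > 0, C ≥ 1, and let F : [v₀, ∞) → [0, ∞) be continuous and satisfy F(v₂) + b ∫_{v₁}^{v₂} F(v) dv ≤ C · F(v₁) for all v₀ ≤ v₁ ≤ v₂. Then F(v) ≤ C · F(v₀) · e^{-(b/C)(v - v₀)} for all v ≥ v₀. -/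
open Set MeasureTheory

/-!
With `k = b / C` and the tail integral `g s = ∫ v in s..V, F v`, the Lyapunov function
`H s = exp (k (s - v₀)) * (F V + b * g s)` has derivative
`k * exp (k (s - v₀)) * (F V + b * g s - C * F s)`, which is nonpositive by the hypothesis applied
to `(s, V)`. Hence `exp (k (V - v₀)) * F V = H V ≤ H v₀ = F V + b * g v₀ ≤ C * F v₀`.
-/

theorem hasDerivAt_exp_mul_add_integral {F : ℝ → ℝ} {a V b k s : ℝ}
    (hF : ContinuousOn F (Icc a V)) (hs : s ∈ Ioo a V) :
    HasDerivAt (fun u => Real.exp (k * (u - a)) * (F V + b * ∫ v in u..V, F v))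
      (Real.exp (k * (s - a)) * (k * (F V + b * ∫ v in s..V, F v) - b * F s)) s := by
  have hnhds : Icc a V ∈ nhds s := Icc_mem_nhds hs.1 hs.2
  have htail : HasDerivAt (fun u => ∫ v in u..V, F v) (-F s) s :=
    intervalIntegral.integral_hasDerivAt_left
      ((hF.mono (Icc_subset_Icc_left hs.1.le)).intervalIntegrable_of_Icc hs.2.le)
      ⟨Icc a V, hnhds, hF.aestronglyMeasurable measurableSet_Icc⟩ (hF.continuousAt hnhds)
  have hexp : HasDerivAt (fun u => Real.exp (k * (u - a))) (Real.exp (k * (s - a)) * k) s := by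
    simpa using (((hasDerivAt_id s).sub_const a).const_mul k).exp
  exact (hexp.mul ((htail.const_mul b).const_add (F V))).congr_deriv (by ring)

theorem antitoneOn_exp_mul_add_integral {F : ℝ → ℝ} {a V b C : ℝ} (hb : 0 ≤ b) (hC : 0 < C)
    (hF : ContinuousOn F (Icc a V))
    (h : ∀ s ∈ Ioo a V, F V + b * ∫ v in s..V, F v ≤ C * F s) :
    AntitoneOn (fun s => Real.exp (b / C * (s - a)) * (F V + b * ∫ v in s..V, F v))
      (Icc a V) := by
  rcases lt_or_ge V a with hVa | haV
  · exact (subsingleton_Icc_of_ge hVa.le).antitoneOn _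
  have htail : ContinuousOn (fun s => ∫ v in s..V, F v) (Icc a V) := by
    have hFint : IntegrableOn F (uIcc a V) := by
      rw [uIcc_of_le haV]
      exact hF.integrableOn_Icc
    simpa [uIcc_of_le haV] using intervalIntegral.continuousOn_primitive_interval_left hFint
  refine antitoneOn_of_hasDerivWithinAt_nonpos (convex_Icc a V)
    ((by fun_prop : Continuous fun s => Real.exp (b / C * (s - a))).continuousOn.mul
      (continuousOn_const.add (continuousOn_const.mul htail)))
    (fun s hs => (hasDerivAt_exp_mul_add_integral hF
      (by rwa [interior_Icc] at hs)).hasDerivWithinAt) fun s hs => ?_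
  rw [interior_Icc] at hs
  have hrewrite : b / C * (F V + b * ∫ v in s..V, F v) - b * F s
      = b / C * (F V + b * (∫ v in s..V, F v) - C * F s) := by
    field_simp
  rw [hrewrite]
  exact mul_nonpos_of_nonneg_of_nonpos (Real.exp_pos _).le
    (mul_nonpos_of_nonneg_of_nonpos (by positivity) (by linarith [h s hs]))

theorem exponential_decay_from_integrated_decay_general
    (v₀ b C : ℝ) (hb : 0 < b) (hC : 1 ≤ C)
    (F : ℝ → ℝ)
    (hFc : ContinuousOn F (Set.Ici v₀))
    (hint : ∀ v₁ v₂ : ℝ, v₀ ≤ v₁ → v₁ ≤ v₂ →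
      F v₂ + b * ∫ v in v₁..v₂, F v ≤ C * F v₁) :
    ∀ v : ℝ, v₀ ≤ v →
      F v ≤ C * F v₀ * Real.exp (-(b / C) * (v - v₀)) := by
  intro V hV
  have hlyapunov := antitoneOn_exp_mul_add_integral hb.le (by linarith)
    (hFc.mono Icc_subset_Ici_self) (fun s hs => hint s V hs.1.le hs.2.le)
    (left_mem_Icc.2 hV) (right_mem_Icc.2 hV) hV
  simp only [sub_self, mul_zero, Real.exp_zero, one_mul, intervalIntegral.integral_same,
    add_zero] at hlyapunov
  have hdecay : Real.exp (b / C * (V - v₀)) * F V ≤ C * F v₀ :=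
    hlyapunov.trans (hint v₀ V le_rfl hV)
  calc F V = Real.exp (-(b / C) * (V - v₀)) * (Real.exp (b / C * (V - v₀)) * F V) := by
        rw [← mul_assoc, ← Real.exp_add, neg_mul, neg_add_cancel, Real.exp_zero, one_mul]
    _ ≤ Real.exp (-(b / C) * (V - v₀)) * (C * F v₀) := by gcongr
    _ = C * F v₀ * Real.exp (-(b / C) * (V - v₀)) := mul_comm _ _

theorem exponential_decay_from_integrated_decay
    (v₀ b C : ℝ) (hb : 0 < b) (hC : 1 ≤ C)
    (F : ℝ → ℝ)
    (hFc : ContinuousOn F (Set.Ici v₀))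
    (hFnonneg : ∀ v ∈ Set.Ici v₀, 0 ≤ F v)
    (hint : ∀ v₁ v₂ : ℝ, v₀ ≤ v₁ → v₁ ≤ v₂ →
      F v₂ + b * ∫ v in v₁..v₂, F v ≤ C * F v₁) :
    ∀ v : ℝ, v₀ ≤ v →
      F v ≤ C * F v₀ * Real.exp (-(b / C) * (v - v₀)) :=
  exponential_decay_from_integrated_decay_general v₀ b C hb hC F hFc hint
end

section
/- Let M > 0, l > 0, let r₀ > 0 be the unique positive root of F(r) = 1 - 2M/r + r²/l², and let a ∈ ℝ with -9/8 < a ≤ 0. Suppose ψ : [r₀, ∞) → ℝ is continuously differentiable, r^{3/2} ψ(r) → 0 as r → ∞, ∫_{r₀}^∞ r⁴ ψ'(r)² dr < ∞, and ∫_{r₀}^∞ r² ( F(r) ψ'(r)² + (2a/l²) ψ(r)² ) dr ≤ 0. Then ψ ≡ 0 on [r₀, ∞). -/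
/-!
The root `F r₀ = 0` gives `F r = (r - r₀) (r² + r₀ r + r₀² + l²) / (l² r)`. Completing the square
in `((r³ - r₀³) ψ²)'` and integrating, with the boundary term at infinity killed by the decay
`r^{3/2} ψ → 0`, gives the Hardy inequality `∫ r² ψ² ≤ (4/9) ∫ (r³ - r₀³)² r⁻² ψ'²`. Since
`r³ - r₀³ = (r - r₀) (r² + r₀ r + r₀²) ≤ r³`, the Hardy weight is at most `l² r² F`, so for `a ≤ 0`
the energy is at least `(1 + 8a/9) ∫ r² F ψ'²`. For `a > -9/8` this forces `ψ' = 0`, so `ψ` is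
constant, and the decay makes the constant zero.
-/

open Set Filter MeasureTheory Topology

section HalfLine

variable {f g : ℝ → ℝ} {a C : ℝ}

theorem integrableOn_Ioi_of_intervalIntegral_le (hf : ∀ x ∈ Ioi a, 0 ≤ f x)
    (hfi : ∀ R, IntegrableOn f (Ioc a R)) (hg : Tendsto g atTop (𝓝 0))
    (hle : ∀ R ≥ a, ∫ x in a..R, f x ≤ g R + C) : IntegrableOn f (Ioi a) := by
  refine integrableOn_Ioi_of_intervalIntegral_norm_bounded (C + 1) a hfi tendsto_id ?_
  filter_upwards [hg.eventually (eventually_le_nhds one_pos), eventually_ge_atTop a]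
    with R hgR hR
  have hnorm : ∫ x in a..R, ‖f x‖ = ∫ x in a..R, f x := by
    rw [intervalIntegral.integral_of_le hR, intervalIntegral.integral_of_le hR]
    exact setIntegral_congr_fun measurableSet_Ioc fun x hx => Real.norm_of_nonneg (hf x hx.1)
  rw [hnorm]
  linarith [hle R hR]

theorem integral_Ioi_le_of_intervalIntegral_le (hf : ∀ x ∈ Ioi a, 0 ≤ f x)
    (hfi : ∀ R, IntegrableOn f (Ioc a R)) (hg : Tendsto g atTop (𝓝 0))
    (hle : ∀ R ≥ a, ∫ x in a..R, f x ≤ g R + C) : ∫ x in Ioi a, f x ≤ C :=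
  le_of_tendsto_of_tendsto
    (intervalIntegral_tendsto_integral_Ioi a
      (integrableOn_Ioi_of_intervalIntegral_le hf hfi hg hle) tendsto_id)
    (by simpa using hg.add_const C) ((eventually_ge_atTop a).mono hle)

end HalfLine

section Hardy

variable {r₀ : ℝ} {ψ ψ' : ℝ → ℝ}

noncomputable def hardyWeight (r₀ r : ℝ) : ℝ := (r ^ 3 - r₀ ^ 3) ^ 2 / r ^ 2

-- `3 r² x² + 2 (r³ - r₀³) x y` is the derivative of `(r³ - r₀³) ψ²` when `x = ψ`, `y = ψ'`.
theorem hardy_pointwise_bound (r₀ x y : ℝ) {r : ℝ} (hr : 0 < r) :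
    r ^ 2 * x ^ 2 ≤ (2 / 3) * (3 * r ^ 2 * x ^ 2 + 2 * (r ^ 3 - r₀ ^ 3) * (x * y)) +
      (4 / 9) * (hardyWeight r₀ r * y ^ 2) := by
  have hsq : (2 / 3) * (3 * r ^ 2 * x ^ 2 + 2 * (r ^ 3 - r₀ ^ 3) * (x * y)) +
      (4 / 9) * (hardyWeight r₀ r * y ^ 2) - r ^ 2 * x ^ 2 =
      (r * x + 2 / 3 * (r ^ 3 - r₀ ^ 3) * y / r) ^ 2 := by
    unfold hardyWeight
    field_simp
    ring
  rw [← sub_nonneg, hsq]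
  positivity

theorem continuousOn_hardyWeight (hr₀ : 0 < r₀) : ContinuousOn (hardyWeight r₀) (Ici r₀) :=
  fun r hr => by
    have : r ≠ 0 := (hr₀.trans_le hr).ne'
    unfold hardyWeight
    fun_prop (disch := positivity)

theorem intervalIntegral_hardy_le (hr₀ : 0 < r₀)
    (hderiv : ∀ r ∈ Ici r₀, HasDerivAt ψ (ψ' r) r) (hcont : ContinuousOn ψ' (Ici r₀))
    {R : ℝ} (hR : r₀ ≤ R) :
    ∫ r in r₀..R, r ^ 2 * ψ r ^ 2 ≤
      (2 / 3) * ((R ^ 3 - r₀ ^ 3) * ψ R ^ 2) +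
        (4 / 9) * ∫ r in r₀..R, hardyWeight r₀ r * ψ' r ^ 2 := by
  have hsub : uIcc r₀ R ⊆ Ici r₀ := by rw [uIcc_of_le hR]; exact Icc_subset_Ici_self
  have hψ : ContinuousOn ψ (Ici r₀) := fun r hr => (hderiv r hr).continuousAt.continuousWithinAt
  have hw := continuousOn_hardyWeight hr₀
  have hP : ContinuousOn (fun r => 3 * r ^ 2 * ψ r ^ 2 + 2 * (r ^ 3 - r₀ ^ 3) * (ψ r * ψ' r))
      (Ici r₀) := by fun_prop
  have hFTC : ∫ r in r₀..R, (3 * r ^ 2 * ψ r ^ 2 + 2 * (r ^ 3 - r₀ ^ 3) * (ψ r * ψ' r)) =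
      (R ^ 3 - r₀ ^ 3) * ψ R ^ 2 := by
    rw [intervalIntegral.integral_eq_sub_of_hasDerivAt (f := fun r => (r ^ 3 - r₀ ^ 3) * ψ r ^ 2)
      (fun r hr => ?_) ((hP.mono hsub).intervalIntegrable)]
    · simp
    · exact (((hasDerivAt_pow 3 r).sub_const (r₀ ^ 3)).mul
        ((hderiv r (hsub hr)).fun_pow 2)).congr_deriv (by simp; ring)
  have hint : IntervalIntegrable (fun r => hardyWeight r₀ r * ψ' r ^ 2) volume r₀ R :=
    ((hw.mul (hcont.pow 2)).mono hsub).intervalIntegrable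
  calc ∫ r in r₀..R, r ^ 2 * ψ r ^ 2
      ≤ ∫ r in r₀..R, ((2 / 3) * (3 * r ^ 2 * ψ r ^ 2 + 2 * (r ^ 3 - r₀ ^ 3) * (ψ r * ψ' r)) +
          (4 / 9) * (hardyWeight r₀ r * ψ' r ^ 2)) := by
        refine intervalIntegral.integral_mono_on hR ?_ ?_
          fun r hr => hardy_pointwise_bound r₀ _ _ (hr₀.trans_le hr.1)
        · exact (ContinuousOn.mono (by fun_prop) hsub).intervalIntegrable
        · exact ((hP.mono hsub).intervalIntegrable.const_mul _).add (hint.const_mul _)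
    _ = _ := by
        rw [intervalIntegral.integral_add ((hP.mono hsub).intervalIntegrable.const_mul _)
          (hint.const_mul _), intervalIntegral.integral_const_mul,
          intervalIntegral.integral_const_mul, hFTC]

theorem hardy_inequality (hr₀ : 0 < r₀)
    (hderiv : ∀ r ∈ Ici r₀, HasDerivAt ψ (ψ' r) r) (hcont : ContinuousOn ψ' (Ici r₀))
    (hdecay : Tendsto (fun r => r ^ 3 * ψ r ^ 2) atTop (𝓝 0))
    (hw : IntegrableOn (fun r => hardyWeight r₀ r * ψ' r ^ 2) (Ici r₀)) :
    IntegrableOn (fun r => r ^ 2 * ψ r ^ 2) (Ici r₀) ∧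
      ∫ r in Ici r₀, r ^ 2 * ψ r ^ 2 ≤ (4 / 9) * ∫ r in Ici r₀, hardyWeight r₀ r * ψ' r ^ 2 := by
  rw [IntegrableOn, ← restrict_Ioi_eq_restrict_Ici] at hw ⊢
  have hψ : ContinuousOn ψ (Ici r₀) := fun r hr => (hderiv r hr).continuousAt.continuousWithinAt
  have hnonneg : ∀ r ∈ Ioi r₀, 0 ≤ r ^ 2 * ψ r ^ 2 := fun r _ => by positivity
  have hloc : ∀ R, IntegrableOn (fun r => r ^ 2 * ψ r ^ 2) (Ioc r₀ R) := fun R =>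
    ((ContinuousOn.mono (by fun_prop) Icc_subset_Ici_self).integrableOn_Icc).mono_set
      Ioc_subset_Icc_self
  have hle : ∀ R ≥ r₀, ∫ r in r₀..R, r ^ 2 * ψ r ^ 2 ≤
      (2 / 3) * (R ^ 3 * ψ R ^ 2) + (4 / 9) * ∫ r in Ioi r₀, hardyWeight r₀ r * ψ' r ^ 2 := by
    intro R hR
    have htail : ∫ r in r₀..R, hardyWeight r₀ r * ψ' r ^ 2 ≤
        ∫ r in Ioi r₀, hardyWeight r₀ r * ψ' r ^ 2 := by
      rw [intervalIntegral.integral_of_le hR]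
      refine setIntegral_mono_set hw ?_ Ioc_subset_Ioi_self.eventuallyLE
      filter_upwards [ae_restrict_mem measurableSet_Ioi] with r hr
      unfold hardyWeight
      positivity
    have hboundary : (R ^ 3 - r₀ ^ 3) * ψ R ^ 2 ≤ R ^ 3 * ψ R ^ 2 := by
      nlinarith [pow_pos hr₀ 3, sq_nonneg (ψ R)]
    linarith [intervalIntegral_hardy_le hr₀ hderiv hcont hR]
  have hg : Tendsto (fun R => (2 / 3) * (R ^ 3 * ψ R ^ 2)) atTop (𝓝 0) := by
    simpa using hdecay.const_mul (2 / 3)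
  exact ⟨integrableOn_Ioi_of_intervalIntegral_le hnonneg hloc hg hle,
    integral_Ioi_le_of_intervalIntegral_le hnonneg hloc hg hle⟩

end Hardy

section Decay

variable {ψ : ℝ → ℝ}

theorem tendsto_pow_three_mul_sq (h : Tendsto (fun r : ℝ => r ^ ((3 : ℝ) / 2) * ψ r) atTop (𝓝 0)) :
    Tendsto (fun r => r ^ 3 * ψ r ^ 2) atTop (𝓝 0) := by
  refine (by simpa using h.mul h : Tendsto (fun r => (r ^ ((3 : ℝ) / 2) * ψ r) *
    (r ^ ((3 : ℝ) / 2) * ψ r)) atTop (𝓝 0)).congr' ?_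
  filter_upwards [eventually_gt_atTop 0] with r hr
  rw [mul_mul_mul_comm, ← Real.rpow_add hr, ← sq]
  norm_num

theorem tendsto_zero_of_tendsto_rpow_mul {p : ℝ} (hp : 0 < p)
    (h : Tendsto (fun r : ℝ => r ^ p * ψ r) atTop (𝓝 0)) : Tendsto ψ atTop (𝓝 0) := by
  refine (by simpa using (tendsto_rpow_neg_atTop hp).mul h :
    Tendsto (fun r => r ^ (-p) * (r ^ p * ψ r)) atTop (𝓝 0)).congr' ?_
  filter_upwards [eventually_gt_atTop 0] with r hr
  rw [← mul_assoc, ← Real.rpow_add hr, neg_add_cancel, Real.rpow_zero, one_mul]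

end Decay

theorem eqOn_zero_of_deriv_ae_eq_zero {a : ℝ} {ψ ψ' : ℝ → ℝ}
    (hderiv : ∀ r ∈ Ici a, HasDerivAt ψ (ψ' r) r) (hcont : ContinuousOn ψ' (Ici a))
    (h0 : ψ' =ᵐ[volume.restrict (Ici a)] 0) (hlim : Tendsto ψ atTop (𝓝 0)) :
    EqOn ψ 0 (Ici a) := by
  have hψ' : EqOn ψ' 0 (Ici a) :=
    Measure.eqOn_of_ae_eq h0 hcont continuousOn_const (by rw [interior_Ici, closure_Ioi])
  have hconst : ∀ R ∈ Ici a, ψ R = ψ a := fun R hR =>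
    constant_of_has_deriv_right_zero
      (fun r hr => (hderiv r hr.1).continuousAt.continuousWithinAt)
      (fun r hr => by simpa [hψ' hr.1] using (hderiv r hr.1).hasDerivWithinAt)
      R (right_mem_Icc.2 hR)
  have ha : ψ a = 0 :=
    tendsto_nhds_unique (tendsto_const_nhds.congr' ((eventually_ge_atTop a).mono
      fun R hR => (hconst R hR).symm)) hlim
  exact fun r hr => (hconst r hr).trans ha

section SchwarzschildAdS

variable {M l r₀ r : ℝ}

noncomputable def schwarzschildAdSF (M l r : ℝ) : ℝ := 1 - 2 * M / r + r ^ 2 / l ^ 2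

theorem continuousOn_schwarzschildAdSF : ContinuousOn (schwarzschildAdSF M l) (Ioi 0) :=
  fun r hr => by
    have : r ≠ 0 := (mem_Ioi.1 hr).ne'
    unfold schwarzschildAdSF
    fun_prop (disch := assumption)

theorem schwarzschildAdSF_eq_of_root (hl : l ≠ 0) (hr₀ : r₀ ≠ 0)
    (hroot : schwarzschildAdSF M l r₀ = 0) (hr : r ≠ 0) :
    schwarzschildAdSF M l r = (r - r₀) * (r ^ 2 + r₀ * r + r₀ ^ 2 + l ^ 2) / (l ^ 2 * r) := by
  unfold schwarzschildAdSF at hroot ⊢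
  field_simp at hroot ⊢
  linear_combination hroot

theorem schwarzschildAdSF_pos_of_root (hl : l ≠ 0) (hr₀ : 0 < r₀)
    (hroot : schwarzschildAdSF M l r₀ = 0) (hr : r₀ < r) : 0 < schwarzschildAdSF M l r := by
  rw [schwarzschildAdSF_eq_of_root hl hr₀.ne' hroot (hr₀.trans hr).ne']
  have := sub_pos.2 hr
  have := hr₀.trans hr
  positivity

theorem schwarzschildAdSF_nonneg_of_root (hl : l ≠ 0) (hr₀ : 0 < r₀)
    (hroot : schwarzschildAdSF M l r₀ = 0) (hr : r₀ ≤ r) : 0 ≤ schwarzschildAdSF M l r := by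
  rw [schwarzschildAdSF_eq_of_root hl hr₀.ne' hroot (hr₀.trans_le hr).ne']
  have := sub_nonneg.2 hr
  have := hr₀.trans_le hr
  positivity

theorem hardyWeight_le_of_root (hl : l ≠ 0) (hr₀ : 0 < r₀)
    (hroot : schwarzschildAdSF M l r₀ = 0) (hr : r₀ ≤ r) :
    hardyWeight r₀ r ≤ l ^ 2 * (r ^ 2 * schwarzschildAdSF M l r) := by
  have hr0 : 0 < r := hr₀.trans_le hr
  set q := r ^ 2 + r₀ * r + r₀ ^ 2
  have hcube : r ^ 3 - r₀ ^ 3 = (r - r₀) * q := by ring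
  have hpos : 0 ≤ (r - r₀) * q := mul_nonneg (sub_nonneg.2 hr) (by positivity)
  rw [hardyWeight, div_le_iff₀ (by positivity),
    schwarzschildAdSF_eq_of_root hl hr₀.ne' hroot hr0.ne']
  calc (r ^ 3 - r₀ ^ 3) ^ 2 = (r ^ 3 - r₀ ^ 3) * ((r - r₀) * q) := by rw [hcube, sq]
    _ ≤ r ^ 3 * ((r - r₀) * q) :=
        mul_le_mul_of_nonneg_right (sub_le_self _ (by positivity)) hpos
    _ ≤ r ^ 3 * ((r - r₀) * (q + l ^ 2)) := by
        gcongr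
        exact le_add_of_nonneg_right (sq_nonneg l)
    _ = l ^ 2 * (r ^ 2 * ((r - r₀) * (q + l ^ 2) / (l ^ 2 * r))) * r ^ 2 := by
        field_simp

theorem sq_mul_schwarzschildAdSF_le (hM : 0 ≤ M) (hr₀ : 0 < r₀) (hr : r₀ ≤ r) :
    r ^ 2 * schwarzschildAdSF M l r ≤ (1 / r₀ ^ 2 + 1 / l ^ 2) * r ^ 4 := by
  have hr0 : 0 < r := hr₀.trans_le hr
  have hF : schwarzschildAdSF M l r ≤ 1 + r ^ 2 / l ^ 2 := by
    unfold schwarzschildAdSF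
    linarith [div_nonneg (mul_nonneg zero_le_two hM) hr0.le]
  have hr2 : r ^ 2 ≤ r ^ 4 / r₀ ^ 2 := by
    rw [le_div_iff₀ (by positivity)]
    nlinarith [pow_le_pow_left₀ hr₀.le hr 2, sq_nonneg r]
  calc r ^ 2 * schwarzschildAdSF M l r ≤ r ^ 2 * (1 + r ^ 2 / l ^ 2) := by gcongr
    _ ≤ r ^ 4 / r₀ ^ 2 + r ^ 4 / l ^ 2 := by
        rw [mul_add, mul_one, mul_div_assoc', ← pow_add]
        linarith
    _ = (1 / r₀ ^ 2 + 1 / l ^ 2) * r ^ 4 := by ring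

end SchwarzschildAdS

section Energy

variable {M l r₀ : ℝ} {ψ ψ' : ℝ → ℝ}

theorem integrableOn_kineticEnergy (hM : 0 ≤ M) (hl : l ≠ 0) (hr₀ : 0 < r₀)
    (hroot : schwarzschildAdSF M l r₀ = 0) (hcont : ContinuousOn ψ' (Ici r₀))
    (hint : IntegrableOn (fun r => r ^ 4 * ψ' r ^ 2) (Ici r₀)) :
    IntegrableOn (fun r => r ^ 2 * schwarzschildAdSF M l r * ψ' r ^ 2) (Ici r₀) := by
  have hF : ContinuousOn (schwarzschildAdSF M l) (Ici r₀) :=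
    continuousOn_schwarzschildAdSF.mono fun r hr => hr₀.trans_le hr
  refine (hint.const_mul (1 / r₀ ^ 2 + 1 / l ^ 2)).mono'
    ((by fun_prop : ContinuousOn _ (Ici r₀)).aestronglyMeasurable measurableSet_Ici) ?_
  filter_upwards [ae_restrict_mem measurableSet_Ici] with r hr
  rw [Real.norm_of_nonneg (by positivity [schwarzschildAdSF_nonneg_of_root hl hr₀ hroot hr]),
    ← mul_assoc]
  exact mul_le_mul_of_nonneg_right (sq_mul_schwarzschildAdSF_le hM hr₀ hr) (sq_nonneg _)

theorem integral_hardyWeight_le_kineticEnergy (hl : l ≠ 0) (hr₀ : 0 < r₀)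
    (hroot : schwarzschildAdSF M l r₀ = 0) (hcont : ContinuousOn ψ' (Ici r₀))
    (hE : IntegrableOn (fun r => r ^ 2 * schwarzschildAdSF M l r * ψ' r ^ 2) (Ici r₀)) :
    IntegrableOn (fun r => hardyWeight r₀ r * ψ' r ^ 2) (Ici r₀) ∧
      ∫ r in Ici r₀, hardyWeight r₀ r * ψ' r ^ 2 ≤
        l ^ 2 * ∫ r in Ici r₀, r ^ 2 * schwarzschildAdSF M l r * ψ' r ^ 2 := by
  have hle : ∀ r ∈ Ici r₀, hardyWeight r₀ r * ψ' r ^ 2 ≤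
      l ^ 2 * (r ^ 2 * schwarzschildAdSF M l r * ψ' r ^ 2) := fun r hr => by
    simpa only [mul_assoc] using
      mul_le_mul_of_nonneg_right (hardyWeight_le_of_root hl hr₀ hroot hr) (sq_nonneg (ψ' r))
  have hW : IntegrableOn (fun r => hardyWeight r₀ r * ψ' r ^ 2) (Ici r₀) := by
    refine (hE.const_mul (l ^ 2)).mono'
      (((continuousOn_hardyWeight hr₀).mul (hcont.pow 2)).aestronglyMeasurable
        measurableSet_Ici) ?_
    filter_upwards [ae_restrict_mem measurableSet_Ici] with r hr
    rw [Real.norm_of_nonneg (by unfold hardyWeight; positivity)]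
    exact hle r hr
  refine ⟨hW, ?_⟩
  rw [← integral_const_mul]
  exact setIntegral_mono_on hW (hE.const_mul _) measurableSet_Ici hle

theorem deriv_ae_eq_zero_of_kineticEnergy_eq_zero (hl : l ≠ 0) (hr₀ : 0 < r₀)
    (hroot : schwarzschildAdSF M l r₀ = 0)
    (hE : IntegrableOn (fun r => r ^ 2 * schwarzschildAdSF M l r * ψ' r ^ 2) (Ici r₀))
    (hE0 : ∫ r in Ici r₀, r ^ 2 * schwarzschildAdSF M l r * ψ' r ^ 2 = 0) :
    ψ' =ᵐ[volume.restrict (Ici r₀)] 0 := by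
  have hnonneg : ∀ᵐ r ∂volume.restrict (Ici r₀),
      0 ≤ r ^ 2 * schwarzschildAdSF M l r * ψ' r ^ 2 := by
    filter_upwards [ae_restrict_mem measurableSet_Ici] with r hr
    positivity [schwarzschildAdSF_nonneg_of_root hl hr₀ hroot hr]
  have hae := (setIntegral_eq_zero_iff_of_nonneg_ae hnonneg hE).1 hE0
  rw [← restrict_Ioi_eq_restrict_Ici] at hae ⊢
  filter_upwards [hae, ae_restrict_mem measurableSet_Ioi] with r hEr hr
  have hr0 := hr₀.trans hr
  have hFr := schwarzschildAdSF_pos_of_root hl hr₀ hroot hr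
  simpa [hr0.ne', hFr.ne'] using hEr

end Energy

theorem no_stationary_solutions_general
    (M l r₀ a : ℝ) (hM : 0 < M) (hl : 0 < l) (hr₀ : 0 < r₀)
    (F : ℝ → ℝ) (hF : ∀ r, F r = 1 - 2 * M / r + r ^ 2 / l ^ 2)
    (hroot : F r₀ = 0)
    (ha : -9/8 < a) (ha' : a ≤ 0)
    (ψ ψ' : ℝ → ℝ)
    (hderiv : ∀ r ∈ Set.Ici r₀, HasDerivAt ψ (ψ' r) r)
    (hcont : ContinuousOn ψ' (Set.Ici r₀))
    (hdecay : Tendsto (fun r : ℝ => r ^ ((3:ℝ)/2) * ψ r) atTop (nhds 0))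
    (hint : IntegrableOn (fun r : ℝ => r ^ 4 * (ψ' r) ^ 2) (Set.Ici r₀))
    (henergy : ∫ r in Set.Ici r₀,
        r ^ 2 * (F r * (ψ' r) ^ 2 + (2 * a / l ^ 2) * (ψ r) ^ 2) ≤ 0) :
    ∀ r ∈ Set.Ici r₀, ψ r = 0 := by
  obtain rfl : F = schwarzschildAdSF M l := funext hF
  set K := ∫ r in Ici r₀, r ^ 2 * schwarzschildAdSF M l r * ψ' r ^ 2
  have hKint := integrableOn_kineticEnergy hM.le hl.ne' hr₀ hroot hcont hint
  obtain ⟨hWint, hW⟩ := integral_hardyWeight_le_kineticEnergy hl.ne' hr₀ hroot hcont hKint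
  obtain ⟨hAint, hA⟩ :=
    hardy_inequality hr₀ hderiv hcont (tendsto_pow_three_mul_sq hdecay) hWint
  have hsplit : ∫ r in Ici r₀,
      r ^ 2 * (schwarzschildAdSF M l r * ψ' r ^ 2 + 2 * a / l ^ 2 * ψ r ^ 2)
      = K + 2 * a / l ^ 2 * ∫ r in Ici r₀, r ^ 2 * ψ r ^ 2 := by
    rw [← integral_const_mul, ← integral_add hKint (hAint.const_mul _)]
    exact setIntegral_congr_fun measurableSet_Ici fun r _ => by ring
  rw [hsplit] at henergy
  have hc : 2 * a / l ^ 2 ≤ 0 := div_nonpos_of_nonpos_of_nonneg (by linarith) (sq_nonneg l)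
  have hpot : 8 * a / 9 * K ≤ 2 * a / l ^ 2 * ∫ r in Ici r₀, r ^ 2 * ψ r ^ 2 :=
    calc 8 * a / 9 * K = 2 * a / l ^ 2 * (4 / 9 * (l ^ 2 * K)) := by field_simp; ring
      _ ≤ 2 * a / l ^ 2 * (4 / 9 * ∫ r in Ici r₀, hardyWeight r₀ r * ψ' r ^ 2) :=
        mul_le_mul_of_nonpos_left (by linarith) hc
      _ ≤ _ := mul_le_mul_of_nonpos_left hA hc
  have hK : 0 ≤ K := setIntegral_nonneg measurableSet_Ici fun r hr => by
    positivity [schwarzschildAdSF_nonneg_of_root hl.ne' hr₀ hroot hr]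
  have hK0 : K = 0 := by nlinarith
  exact eqOn_zero_of_deriv_ae_eq_zero hderiv hcont
    (deriv_ae_eq_zero_of_kineticEnergy_eq_zero hl.ne' hr₀ hroot hKint hK0)
    (tendsto_zero_of_tendsto_rpow_mul (by norm_num) hdecay)

theorem no_stationary_solutions
    (M l r₀ a : ℝ) (hM : 0 < M) (hl : 0 < l) (hr₀ : 0 < r₀)
    (F : ℝ → ℝ) (hF : ∀ r, F r = 1 - 2 * M / r + r ^ 2 / l ^ 2)
    (hroot : F r₀ = 0)
    (huniq : ∀ r : ℝ, 0 < r → F r = 0 → r = r₀)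
    (ha : -9/8 < a) (ha' : a ≤ 0)
    (ψ ψ' : ℝ → ℝ)
    (hderiv : ∀ r ∈ Set.Ici r₀, HasDerivAt ψ (ψ' r) r)
    (hcont : ContinuousOn ψ' (Set.Ici r₀))
    (hdecay : Tendsto (fun r : ℝ => r ^ ((3:ℝ)/2) * ψ r) atTop (nhds 0))
    (hint : IntegrableOn (fun r : ℝ => r ^ 4 * (ψ' r) ^ 2) (Set.Ici r₀))
    (henergy : ∫ r in Set.Ici r₀,
        r ^ 2 * (F r * (ψ' r) ^ 2 + (2 * a / l ^ 2) * (ψ r) ^ 2) ≤ 0) :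
    ∀ r ∈ Set.Ici r₀, ψ r = 0 :=
  no_stationary_solutions_general M l r₀ a hM hl hr₀ F hF hroot ha ha' ψ ψ' hderiv hcont hdecay hint
    henergy
end

section
/- Let M > 0, l > 0, c > 0, and let r_Y > 0 satisfy 1 - 2M/r_Y + r_Y²/l² = c^{1/3}. Assume 4M√c / r_Y ≤ c^{1/3}/2 and 3/(4 l²) ≥ c^{1/3}/(8 r_Y²). Then for every r ≥ r_Y and every ϖ ∈ ℝ with |ϖ - M| ≤ 2M√c, one has (1 - 2ϖ/r + r²/l²) / r² ≥ c^{1/3} / (8 r_Y²). -/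
set_option maxHeartbeats 1000000 in
theorem one_minus_mu_lower_bound
    (M l c rY : ℝ) (hM : 0 < M) (hl : 0 < l) (hc : 0 < c) (hrY : 0 < rY)
    (hroot : 1 - 2 * M / rY + rY ^ 2 / l ^ 2 = c ^ ((1:ℝ)/3))
    (hsmall : 4 * M * Real.sqrt c / rY ≤ c ^ ((1:ℝ)/3) / 2)
    (hfar : c ^ ((1:ℝ)/3) / (8 * rY ^ 2) ≤ 3 / (4 * l ^ 2)) :
    ∀ r : ℝ, rY ≤ r → ∀ ϖ : ℝ, |ϖ - M| ≤ 2 * M * Real.sqrt c →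
      (1 - 2 * ϖ / r + r ^ 2 / l ^ 2) / r ^ 2 ≥ c ^ ((1:ℝ)/3) / (8 * rY ^ 2) := by
  intro r hr ϖ hϖ
  set A := c ^ ((1:ℝ)/3) with hA
  have hApos : 0 < A := Real.rpow_pos_of_pos hc _
  have hr0 : 0 < r := lt_of_lt_of_le hrY hr
  have hr2 : 0 < r ^ 2 := by positivity
  have hsq : 0 ≤ Real.sqrt c := Real.sqrt_nonneg c
  have habs := abs_le.mp hϖ
  -- 2M/r ≤ 2M/rY
  have e2 : 2 * M / r ≤ 2 * M / rY := by gcongr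
  -- 2(M-ϖ)/r ≥ -(4 M √c / rY)
  have e3 : -(4 * M * Real.sqrt c / rY) ≤ 2 * (M - ϖ) / r := by
    have h1 : -(4 * M * Real.sqrt c) / r ≤ 2 * (M - ϖ) / r := by
      gcongr
      linarith [habs.2]
    have h2 : 4 * M * Real.sqrt c / r ≤ 4 * M * Real.sqrt c / rY := by
      gcongr
    calc -(4 * M * Real.sqrt c / rY) ≤ -(4 * M * Real.sqrt c / r) := by linarith
      _ = -(4 * M * Real.sqrt c) / r := by ring
      _ ≤ 2 * (M - ϖ) / r := h1
  have e1 : 2 * ϖ / r = 2 * M / r - 2 * (M - ϖ) / r := by ring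
  have e4 : r ^ 2 / l ^ 2 = rY ^ 2 / l ^ 2 + (r ^ 2 - rY ^ 2) / l ^ 2 := by ring
  have hstep : A / 2 + (r ^ 2 - rY ^ 2) / l ^ 2 ≤ 1 - 2 * ϖ / r + r ^ 2 / l ^ 2 := by
    linarith
  have hnn : 0 ≤ (r ^ 2 - rY ^ 2) / l ^ 2 := by
    apply div_nonneg _ (by positivity)
    nlinarith
  rcases le_or_gt r (2 * rY) with h | h
  · -- near region: r ≤ 2 rY
    have hf : A / 2 ≤ 1 - 2 * ϖ / r + r ^ 2 / l ^ 2 := by linarith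
    have h5 : A / (8 * rY ^ 2) ≤ (A / 2) / r ^ 2 := by
      rw [div_le_div_iff₀ (by positivity) hr2]
      have hr2' : r ^ 2 ≤ 4 * rY ^ 2 := by nlinarith
      nlinarith [mul_le_mul_of_nonneg_left hr2' hApos.le]
    have h6 : (A / 2) / r ^ 2 ≤ (1 - 2 * ϖ / r + r ^ 2 / l ^ 2) / r ^ 2 :=
      (div_le_div_iff_of_pos_right hr2).mpr hf
    linarith
  · -- far region: r > 2 rY
    have h7 : 3 / (4 * l ^ 2) ≤ ((r ^ 2 - rY ^ 2) / l ^ 2) / r ^ 2 := by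
      rw [div_div, div_le_div_iff₀ (by positivity) (by positivity)]
      have h4 : 4 * rY ^ 2 ≤ r ^ 2 := by nlinarith
      linarith [mul_le_mul_of_nonneg_left h4 (sq_nonneg l)]
    have h8 : (A / 2 + (r ^ 2 - rY ^ 2) / l ^ 2) / r ^ 2
        ≤ (1 - 2 * ϖ / r + r ^ 2 / l ^ 2) / r ^ 2 :=
      (div_le_div_iff_of_pos_right hr2).mpr hstep
    have h9 : (A / 2 + (r ^ 2 - rY ^ 2) / l ^ 2) / r ^ 2
        = (A / 2) / r ^ 2 + ((r ^ 2 - rY ^ 2) / l ^ 2) / r ^ 2 := by ring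
    have h10 : 0 ≤ (A / 2) / r ^ 2 := by positivity
    linarith
end
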